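/- arXiv:2307.00278 — 3 statements merged into one kernel-verified Lean document; each statement's English description precedes it below -/
import Mathlib

section
/- Assume ⟨Au, u⟩_Y ≥ 0 for all u ∈ X. If u ∈ X and u_h ∈ X_h satisfy the Galerkin orthogonality b(u − u_h, z_h) = 0 for all z_h ∈ Y_h, then the Galerkin projection is bounded: ‖u_h‖_{X_h} ≤ 2 · ‖u‖_X. -/
/-!
Test the Galerkin orthogonality with `z_h = u_h + P_h(A u_h) ∈ Y_h`. Since `P_h` is self-adjoint
and fixes `u_h`, `⟪u_h + A u_h, z_h⟫ = ‖u_h‖² + ‖A_h u_h‖² + 2⟪A u_h, u_h⟫ ≥ ‖u_h‖_{X_h}²`,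
while by Cauchy–Schwarz `⟪u + A u, z_h⟫ ≤ ‖u + A u‖ ‖z_h‖ ≤ 2 ‖u‖_X ‖u_h‖_{X_h}`.
-/

open Real
open scoped InnerProductSpace

lemma norm_add_le_sqrt_two_mul_sqrt_sq_add_sq {F : Type*} [SeminormedAddCommGroup F] (x y : F) :
    ‖x + y‖ ≤ √2 * √(‖x‖ ^ 2 + ‖y‖ ^ 2) := by
  rw [← sqrt_mul zero_le_two]
  exact (norm_add_le x y).trans (le_sqrt_of_sq_le add_sq_le)

lemma real_inner_add_add_le {E : Type*} [NormedAddCommGroup E] [InnerProductSpace ℝ E]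
    (x y z w : E) :
    ⟪x + y, z + w⟫_ℝ ≤ 2 * √(‖x‖ ^ 2 + ‖y‖ ^ 2) * √(‖z‖ ^ 2 + ‖w‖ ^ 2) :=
  calc ⟪x + y, z + w⟫_ℝ ≤ ‖x + y‖ * ‖z + w‖ := real_inner_le_norm _ _
    _ ≤ (√2 * √(‖x‖ ^ 2 + ‖y‖ ^ 2)) * (√2 * √(‖z‖ ^ 2 + ‖w‖ ^ 2)) := by
      gcongr <;> exact norm_add_le_sqrt_two_mul_sqrt_sq_add_sq _ _
    _ = 2 * √(‖x‖ ^ 2 + ‖y‖ ^ 2) * √(‖z‖ ^ 2 + ‖w‖ ^ 2) := by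
      rw [mul_mul_mul_comm, mul_self_sqrt zero_le_two, mul_assoc]

lemma Submodule.norm_sq_add_norm_orthogonalProjectionOnto_sq_le_inner
    {E : Type*} [NormedAddCommGroup E] [InnerProductSpace ℝ E]
    (K : Submodule ℝ E) [K.HasOrthogonalProjection] {v : E} (hv : v ∈ K) {a : E}
    (ha : 0 ≤ ⟪a, v⟫_ℝ) :
    ‖v‖ ^ 2 + ‖(K.orthogonalProjectionOnto a : E)‖ ^ 2 ≤
      ⟪v + a, v + K.orthogonalProjectionOnto a⟫_ℝ := by
  have hvp : ⟪v, K.orthogonalProjectionOnto a⟫_ℝ = ⟪a, v⟫_ℝ := by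
    rw [← real_inner_comm a v]
    exact K.inner_orthogonalProjectionOnto_eq_of_mem_left ⟨v, hv⟩ a
  have hap : ⟪a, K.orthogonalProjectionOnto a⟫_ℝ = ‖(K.orthogonalProjectionOnto a : E)‖ ^ 2 := by
    rw [← real_inner_self_eq_norm_sq, ← K.inner_orthogonalProjectionOnto_eq_of_mem_right, K.coe_inner]
  rw [inner_add_left, inner_add_right, inner_add_right, real_inner_self_eq_norm_sq, hvp, hap]
  linarith

theorem spacetime_galerkin_projection_bounded_general
    {Y : Type*} [NormedAddCommGroup Y] [InnerProductSpace ℝ Y]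
    (X : Submodule ℝ Y) (A : X →ₗ[ℝ] Y)
    (Yh : Submodule ℝ Y) [Submodule.HasOrthogonalProjection Yh]
    (Xh : Submodule ℝ Y) (hXhX : Xh ≤ X) (hXhY : Xh ≤ Yh)
    (hpos : ∀ w : X, 0 ≤ (inner ℝ (A w) (w : Y) : ℝ))
    (u : X) (uh : Y) (huh : uh ∈ Xh)
    (hGal : ∀ zh ∈ Yh,
      (inner ℝ (((u - ⟨uh, hXhX huh⟩ : X) : Y) + A (u - ⟨uh, hXhX huh⟩)) zh : ℝ) = 0) :
    Real.sqrt (‖uh‖ ^ 2 + ‖(Submodule.orthogonalProjectionOnto Yh (A ⟨uh, hXhX huh⟩) : Y)‖ ^ 2) ≤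
      2 * Real.sqrt (‖(u : Y)‖ ^ 2 + ‖A u‖ ^ 2) := by
  set p : Y := (Yh.orthogonalProjectionOnto (A ⟨uh, hXhX huh⟩) : Y)
  set N := √(‖uh‖ ^ 2 + ‖p‖ ^ 2)
  set M := √(‖(u : Y)‖ ^ 2 + ‖A u‖ ^ 2)
  have hz : uh + p ∈ Yh := Yh.add_mem (hXhY huh) (Yh.orthogonalProjectionOnto _).2
  have hGal_z : ⟪uh + A ⟨uh, hXhX huh⟩, uh + p⟫_ℝ = ⟪(u : Y) + A u, uh + p⟫_ℝ := by
    have h := hGal _ hz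
    rw [map_sub, Submodule.coe_sub, ← add_sub_add_comm, inner_sub_left, sub_eq_zero] at h
    exact h.symm
  have hN : N ^ 2 ≤ 2 * M * N :=
    calc N ^ 2 = ‖uh‖ ^ 2 + ‖p‖ ^ 2 := sq_sqrt (by positivity)
      _ ≤ ⟪uh + A ⟨uh, hXhX huh⟩, uh + p⟫_ℝ :=
        Yh.norm_sq_add_norm_orthogonalProjectionOnto_sq_le_inner (hXhY huh) (hpos _)
      _ = ⟪(u : Y) + A u, uh + p⟫_ℝ := hGal_z
      _ ≤ 2 * M * N := real_inner_add_add_le _ _ _ _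
  nlinarith [show 0 ≤ N from sqrt_nonneg _, show 0 ≤ M from sqrt_nonneg _]

/-- Boundedness of the Galerkin projection: under `⟪Au, u⟫_Y ≥ 0` on `X`, if `u ∈ X` and
`u_h ∈ X_h` satisfy the Galerkin orthogonality `b(u - u_h, z_h) = 0` for all `z_h ∈ Y_h`,
then `‖u_h‖_{X_h} ≤ 2 ‖u‖_X`.  Here `b(w,z) = ⟪w + Aw, z⟫_Y`, `A_h w := P_h (A w)` with the
orthogonal projection `P_h` onto the closed subspace `Y_h`,
`‖w‖_{X_h} = √(‖w‖_Y² + ‖A_h w‖_Y²)` and `‖w‖_X = √(‖w‖_Y² + ‖Aw‖_Y²)`. -/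
theorem spacetime_galerkin_projection_bounded
    {Y : Type*} [NormedAddCommGroup Y] [InnerProductSpace ℝ Y] [CompleteSpace Y]
    (X : Submodule ℝ Y) (A : X →ₗ[ℝ] Y)
    (Yh : Submodule ℝ Y) [Submodule.HasOrthogonalProjection Yh]
    (Xh : Submodule ℝ Y) (hXhX : Xh ≤ X) (hXhY : Xh ≤ Yh)
    (hpos : ∀ w : X, 0 ≤ (inner ℝ (A w) (w : Y) : ℝ))
    (u : X) (uh : Y) (huh : uh ∈ Xh)
    (hGal : ∀ zh ∈ Yh,
      (inner ℝ (((u - ⟨uh, hXhX huh⟩ : X) : Y) + A (u - ⟨uh, hXhX huh⟩)) zh : ℝ) = 0) :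
    Real.sqrt (‖uh‖ ^ 2 + ‖(Submodule.orthogonalProjectionOnto Yh (A ⟨uh, hXhX huh⟩) : Y)‖ ^ 2) ≤
      2 * Real.sqrt (‖(u : Y)‖ ^ 2 + ‖A u‖ ^ 2) :=
  spacetime_galerkin_projection_bounded_general X A Yh Xh hXhX hXhY hpos u uh huh hGal
end

section
/- Let ψ : (0,∞) → ℝ be measurable and α, t ∈ ℝ. Then the map φ_t : ℝ² → ℝ² defined by φ_t(x) := R(α ψ(|x|) t) x for x ≠ 0 and φ_t(0) := 0 is a bijection of ℝ² that preserves two-dimensional Lebesgue measure, i.e. the pushforward of Lebesgue measure under φ_t equals Lebesgue measure. -/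
open MeasureTheory

open Real Set
open scoped ENNReal

/-- The Euclidean norm `|x| = √(x₁² + x₂²)` on `ℝ²`. -/
noncomputable def enorm2 (x : ℝ × ℝ) : ℝ := Real.sqrt (x.1 ^ 2 + x.2 ^ 2)

/-- The map `φ_t(x) = R(α ψ(|x|) t) x` (with `φ_t(0) = 0`), rotating each circle of
radius `r` about the origin by the angle `α ψ(r) t`. -/
noncomputable def deform (α : ℝ) (ψ : ℝ → ℝ) (t : ℝ) (x : ℝ × ℝ) : ℝ × ℝ :=
  (Real.cos (α * ψ (enorm2 x) * t) * x.1 - Real.sin (α * ψ (enorm2 x) * t) * x.2,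
   Real.sin (α * ψ (enorm2 x) * t) * x.1 + Real.cos (α * ψ (enorm2 x) * t) * x.2)

lemma enorm2_deform (α : ℝ) (ψ : ℝ → ℝ) (t : ℝ) (x : ℝ × ℝ) :
    enorm2 (deform α ψ t x) = enorm2 x := by
  set a := α * ψ (enorm2 x) * t with ha
  show Real.sqrt ((Real.cos a * x.1 - Real.sin a * x.2) ^ 2
      + (Real.sin a * x.1 + Real.cos a * x.2) ^ 2) = Real.sqrt (x.1 ^ 2 + x.2 ^ 2)
  congr 1
  linear_combination (x.1 ^ 2 + x.2 ^ 2) * (Real.sin_sq_add_cos_sq a)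

lemma deform_left_inv (α : ℝ) (ψ : ℝ → ℝ) (t : ℝ) (x : ℝ × ℝ) :
    deform α ψ (-t) (deform α ψ t x) = x := by
  have h := enorm2_deform α ψ t x
  simp only [deform] at h ⊢
  rw [h, mul_neg, Real.cos_neg, Real.sin_neg]
  have key := Real.sin_sq_add_cos_sq (α * ψ (enorm2 x) * t)
  refine Prod.ext ?_ ?_ <;> dsimp only
  · linear_combination x.1 * key
  · linear_combination x.2 * key

lemma deform_bijective (α : ℝ) (ψ : ℝ → ℝ) (t : ℝ) :
    Function.Bijective (fun x => deform α ψ t x) := by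
  refine Function.bijective_iff_has_inverse.2 ⟨deform α ψ (-t), ?_, ?_⟩
  · intro x; exact deform_left_inv α ψ t x
  · intro x
    have := deform_left_inv α ψ (-t) x
    rwa [neg_neg] at this

lemma continuous_enorm2 : Continuous enorm2 := by
  unfold enorm2; fun_prop

lemma measurable_deform (α : ℝ) (ψ : ℝ → ℝ) (t : ℝ) (hψ : Measurable ψ) :
    Measurable (deform α ψ t) := by
  have h1 : Measurable fun x : ℝ × ℝ => α * ψ (enorm2 x) * t :=
    ((measurable_const.mul (hψ.comp continuous_enorm2.measurable)).mul measurable_const)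
  exact ((Real.measurable_cos.comp h1).mul measurable_fst |>.sub
      ((Real.measurable_sin.comp h1).mul measurable_snd)).prodMk
      ((Real.measurable_sin.comp h1).mul measurable_fst |>.add
      ((Real.measurable_cos.comp h1).mul measurable_snd))

lemma polar_symm_eq (q : ℝ × ℝ) :
    polarCoord.symm q = (q.1 * Real.cos q.2, q.1 * Real.sin q.2) := rfl

lemma measurable_polar_symm : Measurable (polarCoord.symm : ℝ × ℝ → ℝ × ℝ) := by
  have : (polarCoord.symm : ℝ × ℝ → ℝ × ℝ)
      = fun q => (q.1 * Real.cos q.2, q.1 * Real.sin q.2) := rfl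
  rw [this]; fun_prop

lemma enorm2_polar_symm (p : ℝ × ℝ) (hp : 0 < p.1) :
    enorm2 (polarCoord.symm p) = p.1 := by
  show Real.sqrt ((p.1 * cos p.2) ^ 2 + (p.1 * sin p.2) ^ 2) = p.1
  rw [show (p.1 * cos p.2) ^ 2 + (p.1 * sin p.2) ^ 2 = p.1 ^ 2 by
    linear_combination p.1 ^ 2 * (Real.sin_sq_add_cos_sq p.2)]
  exact Real.sqrt_sq hp.le

lemma deform_polar (α : ℝ) (ψ : ℝ → ℝ) (t : ℝ) (p : ℝ × ℝ) (hp : 0 < p.1) :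
    deform α ψ t (polarCoord.symm p)
      = polarCoord.symm (p.1, p.2 + α * ψ p.1 * t) := by
  have hnorm := enorm2_polar_symm p hp
  rw [polar_symm_eq] at hnorm
  simp only [deform, polar_symm_eq, hnorm]
  refine Prod.ext ?_ ?_ <;> dsimp only
  · rw [Real.cos_add]; ring
  · rw [Real.sin_add]; ring

/-- Lebesgue integral in polar coordinates. -/
lemma lintegral_polar (g : ℝ × ℝ → ℝ≥0∞) :
    ∫⁻ p, g p = ∫⁻ p in polarCoord.target, ENNReal.ofReal p.1 * g (polarCoord.symm p) := by
  set B : ℝ × ℝ → ℝ × ℝ →L[ℝ] ℝ × ℝ := fun p =>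
    LinearMap.toContinuousLinearMap (Matrix.toLin (Module.Basis.finTwoProd ℝ) (Module.Basis.finTwoProd ℝ)
      !![cos p.2, -p.1 * sin p.2; sin p.2, p.1 * cos p.2]) with hB
  have A : ∀ p ∈ polarCoord.target, HasFDerivWithinAt polarCoord.symm (B p) polarCoord.target p :=
    fun p _ => (hasFDerivAt_polarCoord_symm p).hasFDerivWithinAt
  have B_det : ∀ p, (B p).det = p.1 := by
    intro p
    conv_rhs => rw [← one_mul p.1, ← cos_sq_add_sin_sq p.2]
    simp only [B, neg_mul, LinearMap.det_toContinuousLinearMap, LinearMap.det_toLin,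
      Matrix.det_fin_two_of, sub_neg_eq_add]
    ring
  calc
    ∫⁻ p, g p = ∫⁻ p in polarCoord.source, g p := by
      rw [← setLIntegral_univ]
      exact (setLIntegral_congr polarCoord_source_ae_eq_univ).symm
    _ = ∫⁻ p in polarCoord.symm '' polarCoord.target, g p := by
      rw [polarCoord.symm_image_target_eq_source]
    _ = ∫⁻ p in polarCoord.target, ENNReal.ofReal |(B p).det| * g (polarCoord.symm p) :=
      lintegral_image_eq_lintegral_abs_det_fderiv_mul volume
        polarCoord.open_target.measurableSet A polarCoord.symm.injOn g
    _ = ∫⁻ p in polarCoord.target, ENNReal.ofReal p.1 * g (polarCoord.symm p) := by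
      refine setLIntegral_congr_fun polarCoord.open_target.measurableSet
        (fun p hp => ?_)
      rw [B_det, abs_of_pos]
      exact hp.1

/-- Translating a `2π`-periodic function does not change its integral over a period. -/
lemma lintegral_Ioc_add_periodic (f : ℝ → ℝ≥0∞) (hf : Measurable f)
    (hper : Function.Periodic f (2 * π)) (c : ℝ) :
    ∫⁻ θ in Ioc (-π) π, f (θ + c) = ∫⁻ θ in Ioc (-π) π, f θ := by
  have h2π : (0 : ℝ) < 2 * π := by positivity
  haveI : Fact ((0 : ℝ) < 2 * π) := ⟨h2π⟩
  set T : ℝ := 2 * π with hT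
  set g : AddCircle T → ℝ≥0∞ := AddCircle.liftIoc T (-π) f with hgdef
  have hg_meas : Measurable g := by
    have : g = f ∘ (Subtype.val) ∘ (AddCircle.measurableEquivIoc T (-π)) := rfl
    rw [this]
    exact hf.comp (measurable_subtype_coe.comp
      (AddCircle.measurableEquivIoc T (-π)).measurable)
  have hg : ∀ x : ℝ, g ↑x = f x := by
    intro x
    obtain ⟨n, hn, -⟩ := existsUnique_add_zsmul_mem_Ioc h2π x (-π)
    have h0 : ((x + n • T : ℝ) : AddCircle T) = (x : AddCircle T) := by
      have : ((n • T : ℝ) : AddCircle T) = 0 :=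
        (QuotientAddGroup.eq_zero_iff _).2
          (AddSubgroup.zsmul_mem _ (AddSubgroup.mem_zmultiples T) n)
      rw [QuotientAddGroup.mk_add, this, add_zero]
    have h1 : f (x + n • T) = f x := by
      have := (hper.int_mul n) x
      simpa [zsmul_eq_mul, mul_comm] using this
    rw [← h0, hgdef, AddCircle.liftIoc_coe_apply hn, h1]
  have hIoc : Ioc (-π) π = Ioc (-π) (-π + T) := by
    congr 1; rw [hT]; ring
  have hmp := AddCircle.measurePreserving_mk T (-π)
  calc
    ∫⁻ θ in Ioc (-π) π, f (θ + c)
        = ∫⁻ θ in Ioc (-π) (-π + T), g (((θ : ℝ) : AddCircle T) + (c : AddCircle T)) := by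
          rw [← hIoc]
          refine setLIntegral_congr_fun measurableSet_Ioc
            (fun θ _ => ?_)
          rw [← QuotientAddGroup.mk_add, hg]
    _ = ∫⁻ y, g (y + (c : AddCircle T)) ∂(volume : Measure (AddCircle T)) :=
          hmp.lintegral_comp (hg_meas.comp (measurable_add_const _))
    _ = ∫⁻ y, g y ∂(volume : Measure (AddCircle T)) :=
          lintegral_add_right_eq_self g _
    _ = ∫⁻ θ in Ioc (-π) (-π + T), g ((θ : ℝ) : AddCircle T) :=
          (hmp.lintegral_comp hg_meas).symm
    _ = ∫⁻ θ in Ioc (-π) π, f θ := by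
          rw [← hIoc]
          refine setLIntegral_congr_fun measurableSet_Ioc
            (fun θ _ => ?_)
          rw [hg]

lemma setLIntegral_prod_target (G : ℝ × ℝ → ℝ≥0∞) (hG : Measurable G) :
    ∫⁻ p in (Ioi (0 : ℝ)) ×ˢ Ioo (-π) π, G p
      = ∫⁻ r in Ioi (0 : ℝ), ∫⁻ θ in Ioo (-π) π, G (r, θ) := by
  rw [Measure.volume_eq_prod, ← Measure.prod_restrict, lintegral_prod _ hG.aemeasurable]

/-- The polar-coordinates integrand associated with the indicator of `s`. -/
noncomputable def Fp (s : Set (ℝ × ℝ)) : ℝ × ℝ → ℝ≥0∞ :=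
  fun q => ENNReal.ofReal q.1 * s.indicator (fun _ => (1 : ℝ≥0∞)) (polarCoord.symm q)

lemma Fp_meas {s : Set (ℝ × ℝ)} (hs : MeasurableSet s) : Measurable (Fp s) :=
  (measurable_fst.ennreal_ofReal).mul
    ((measurable_one.indicator hs).comp measurable_polar_symm)

lemma Fp_periodic (s : Set (ℝ × ℝ)) (r : ℝ) :
    Function.Periodic (fun θ => Fp s (r, θ)) (2 * π) := by
  intro θ
  have h : polarCoord.symm (r, θ + 2 * π) = polarCoord.symm (r, θ) := by
    rw [polar_symm_eq, polar_symm_eq]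
    dsimp only
    rw [Real.cos_add_two_pi, Real.sin_add_two_pi]
  unfold Fp
  dsimp only
  rw [h]

lemma deform_preimage_volume (α t : ℝ) (ψ : ℝ → ℝ) (hψ : Measurable ψ)
    {s : Set (ℝ × ℝ)} (hs : MeasurableSet s) :
    volume (deform α ψ t ⁻¹' s) = volume s := by
  have hφ : Measurable (deform α ψ t) := measurable_deform α ψ t hψ
  have hI : Measurable (s.indicator (fun _ => (1 : ℝ≥0∞))) := measurable_one.indicator hs
  have hF : Measurable (Fp s) := Fp_meas hs
  have hc : Measurable fun r : ℝ => α * ψ r * t :=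
    (measurable_const.mul hψ).mul measurable_const
  have hG : Measurable fun p : ℝ × ℝ => Fp s (p.1, p.2 + α * ψ p.1 * t) :=
    hF.comp (measurable_fst.prodMk (measurable_snd.add (hc.comp measurable_fst)))
  have h1 : volume (deform α ψ t ⁻¹' s)
      = ∫⁻ x, s.indicator (fun _ => (1 : ℝ≥0∞)) (deform α ψ t x) := by
    rw [← lintegral_indicator_one (hφ hs)]
    exact lintegral_congr fun x => rfl
  have h2 : volume s = ∫⁻ p in polarCoord.target, Fp s p := by
    rw [← lintegral_indicator_one hs]
    exact lintegral_polar (s.indicator (fun _ => (1 : ℝ≥0∞)))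
  have h3 : ∫⁻ x, s.indicator (fun _ => (1 : ℝ≥0∞)) (deform α ψ t x)
      = ∫⁻ p in polarCoord.target, Fp s (p.1, p.2 + α * ψ p.1 * t) := by
    rw [lintegral_polar (fun x => s.indicator (fun _ => (1 : ℝ≥0∞)) (deform α ψ t x))]
    refine setLIntegral_congr_fun polarCoord.open_target.measurableSet
      (fun p hp => ?_)
    rw [deform_polar α ψ t p hp.1]
    rfl
  have htarget : polarCoord.target = (Ioi (0 : ℝ)) ×ˢ Ioo (-π) π := rfl
  have hinner : ∀ r : ℝ, ∫⁻ θ in Ioo (-π) π, Fp s (r, θ + α * ψ r * t)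
      = ∫⁻ θ in Ioo (-π) π, Fp s (r, θ) := by
    intro r
    rw [Measure.restrict_congr_set Ioo_ae_eq_Ioc]
    exact lintegral_Ioc_add_periodic (fun θ => Fp s (r, θ))
      (hF.comp (measurable_const.prodMk measurable_id)) (Fp_periodic s r) _
  calc
    volume (deform α ψ t ⁻¹' s)
        = ∫⁻ p in polarCoord.target, Fp s (p.1, p.2 + α * ψ p.1 * t) := by rw [h1, h3]
    _ = ∫⁻ r in Ioi (0 : ℝ), ∫⁻ θ in Ioo (-π) π, Fp s (r, θ + α * ψ r * t) := by
        rw [htarget]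
        exact setLIntegral_prod_target (fun p => Fp s (p.1, p.2 + α * ψ p.1 * t)) hG
    _ = ∫⁻ r in Ioi (0 : ℝ), ∫⁻ θ in Ioo (-π) π, Fp s (r, θ) :=
        lintegral_congr fun r => hinner r
    _ = ∫⁻ p in polarCoord.target, Fp s p := by
        rw [htarget]; exact (setLIntegral_prod_target (Fp s) hF).symm
    _ = volume s := h2.symm

/-- For measurable `ψ` and any `α, t ∈ ℝ` the map `φ_t(x) = R(α ψ(|x|) t) x` is a bijection
of `ℝ²` preserving two-dimensional Lebesgue measure. -/
theorem rotational_deformation_measure_preserving (α t : ℝ) (ψ : ℝ → ℝ)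
    (hψ : Measurable ψ) :
    Function.Bijective (fun x => deform α ψ t x) ∧
    MeasurePreserving (fun x => deform α ψ t x)
      (volume : Measure (ℝ × ℝ)) (volume : Measure (ℝ × ℝ)) := by
  have hφ : Measurable (deform α ψ t) := measurable_deform α ψ t hψ
  refine ⟨deform_bijective α ψ t, hφ, ?_⟩
  refine Measure.ext fun s hs => ?_
  rw [Measure.map_apply hφ hs]
  exact deform_preimage_volume α t ψ hψ hs
end

section
/- Let T > 0, α ∈ ℝ, let v(y) := α(−y₂, y₁), let φ(t,x) := R(αt) x be the rigid rotation flow (R(β) the counterclockwise rotation by β), let Ω ⊆ ℝ² be a bounded measurable set, let ν₀ : ℝ² → [0,∞) be bounded and measurable, and define the transported reluctivity ν(y,t) := ν₀(R(−αt) y). Let u : ℝ² × [0,T] → ℝ be twice continuously differentiable with bounded first- and second-order partial derivatives, and define the material derivative (Du)(y,t) := ∂_t u(y,t) + v(y)·∇_y u(y,t). Then ∫₀ᵀ ∫_{R(αt)Ω} ν(y,t) ∇_y u(y,t) · ∇_y (Du)(y,t) dy dt = (1/2) ∫_{R(αT)Ω} ν(y,T) |∇_y u(y,T)|² dy − (1/2)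 ∫_Ω ν₀(x) |∇_x u(x,0)|² dx. In particular, if ∇u(·,0) vanishes on Ω, the left-hand side equals (1/2) ∫_{R(αT)Ω} ν(y,T) |∇_y u(y,T)|² dy ≥ 0. -/
open MeasureTheory

/-- The partial derivative `∂f/∂y₁` of `f : ℝ² × ℝ → ℝ` (curried). -/
noncomputable def P1 (f : ℝ × ℝ → ℝ → ℝ) (y : ℝ × ℝ) (t : ℝ) : ℝ :=
  deriv (fun s => f (s, y.2) t) y.1

/-- The partial derivative `∂f/∂y₂` of `f : ℝ² × ℝ → ℝ` (curried). -/
noncomputable def P2 (f : ℝ × ℝ → ℝ → ℝ) (y : ℝ × ℝ) (t : ℝ) : ℝ :=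
  deriv (fun s => f (y.1, s) t) y.2

/-- The partial derivative `∂f/∂t` of `f : ℝ² × ℝ → ℝ` (curried). -/
noncomputable def Pt (f : ℝ × ℝ → ℝ → ℝ) (y : ℝ × ℝ) (t : ℝ) : ℝ :=
  deriv (fun s => f y s) t

/-- The material derivative `Df = ∂_t f + v · ∇_y f` with the rigid rotational velocity
field `v(y) = α (-y₂, y₁)`. -/
noncomputable def matD (α : ℝ) (f : ℝ × ℝ → ℝ → ℝ) (y : ℝ × ℝ) (t : ℝ) : ℝ :=
  Pt f y t + α * (-y.2 * P1 f y t + y.1 * P2 f y t)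

/-- The counterclockwise rotation of `ℝ²` by the angle `β`. -/
noncomputable def rot (β : ℝ) (y : ℝ × ℝ) : ℝ × ℝ :=
  (Real.cos β * y.1 - Real.sin β * y.2, Real.sin β * y.1 + Real.cos β * y.2)

/-! ### Auxiliary geometry: the rotation as a linear map -/

noncomputable def rotCLM (β : ℝ) : (ℝ × ℝ) →L[ℝ] (ℝ × ℝ) :=
  LinearMap.toContinuousLinearMap
    { toFun := rot β
      map_add' := fun a b => by
        simp only [rot, Prod.fst_add, Prod.snd_add, Prod.mk_add_mk]
        exact Prod.ext (by ring) (by ring)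
      map_smul' := fun c a => by
        simp only [rot, Prod.smul_fst, Prod.smul_snd, Prod.smul_mk, smul_eq_mul,
          RingHom.id_apply]
        exact Prod.ext (by ring) (by ring) }

lemma rotCLM_apply (β : ℝ) (x : ℝ × ℝ) : rotCLM β x = rot β x := rfl

lemma rot_rot (β γ : ℝ) (x : ℝ × ℝ) : rot β (rot γ x) = rot (β + γ) x := by
  simp only [rot, Real.cos_add, Real.sin_add]
  exact Prod.ext (by ring) (by ring)

lemma rot_zero (x : ℝ × ℝ) : rot 0 x = x := by
  simp [rot]

lemma rot_left_inv (β : ℝ) (x : ℝ × ℝ) : rot (-β) (rot β x) = x := by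
  rw [rot_rot, neg_add_cancel, rot_zero]

lemma rot_injective (β : ℝ) : Function.Injective (rot β) := by
  intro a b h
  have := congrArg (rot (-β)) h
  rwa [rot_left_inv, rot_left_inv] at this

lemma rot_det (β : ℝ) : LinearMap.det ((rotCLM β : (ℝ × ℝ) →L[ℝ] ℝ × ℝ) :
    (ℝ × ℝ) →ₗ[ℝ] ℝ × ℝ) = 1 := by
  rw [← LinearMap.det_toMatrix (Module.Basis.finTwoProd ℝ), Matrix.det_fin_two]
  simp [LinearMap.toMatrix_apply, Module.Basis.coe_finTwoProd_repr, rotCLM, rot]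
  ring_nf
  rw [add_comm]
  exact Real.sin_sq_add_cos_sq β

/-- Change of variables under a rotation: rotations preserve Lebesgue measure. -/
lemma cov {Ω : Set (ℝ × ℝ)} (hΩm : MeasurableSet Ω) (β : ℝ) (g : ℝ × ℝ → ℝ) :
    ∫ y in rot β '' Ω, g y = ∫ x in Ω, g (rot β x) := by
  have hd : ∀ x ∈ Ω, HasFDerivWithinAt (rot β) (rotCLM β) Ω x := fun x _ =>
    ((rotCLM β).hasFDerivAt (x := x)).hasFDerivWithinAt
  rw [integral_image_eq_integral_abs_det_fderiv_smul volume hΩm hd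
    ((rot_injective β).injOn) g]
  simp [ContinuousLinearMap.det, rot_det, rotCLM_apply]

/-! ### Auxiliary calculus -/

def e1 : (ℝ × ℝ) × ℝ := ((1, 0), 0)
def e2 : (ℝ × ℝ) × ℝ := ((0, 1), 0)
def et : (ℝ × ℝ) × ℝ := ((0, 0), 1)

/-- Directional derivative of a curried function of `(y, t)`. -/
noncomputable def pd (u : ℝ × ℝ → ℝ → ℝ) (w p : (ℝ × ℝ) × ℝ) : ℝ :=
  fderiv ℝ (fun q : (ℝ × ℝ) × ℝ => u q.1 q.2) p w

/-- Second derivative of a curried function of `(y, t)`. -/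
noncomputable def sdf (u : ℝ × ℝ → ℝ → ℝ) (p : (ℝ × ℝ) × ℝ) :
    ((ℝ × ℝ) × ℝ) →L[ℝ] ((ℝ × ℝ) × ℝ) →L[ℝ] ℝ :=
  fderiv ℝ (fderiv ℝ (fun q : (ℝ × ℝ) × ℝ => u q.1 q.2)) p

lemma line1_hasDerivAt (y : ℝ × ℝ) (t : ℝ) :
    HasDerivAt (fun s : ℝ => ((s, y.2), t)) e1 y.1 :=
  ((hasDerivAt_id y.1).prodMk (hasDerivAt_const y.1 y.2)).prodMk (hasDerivAt_const y.1 t)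

lemma line2_hasDerivAt (y : ℝ × ℝ) (t : ℝ) :
    HasDerivAt (fun s : ℝ => ((y.1, s), t)) e2 y.2 :=
  ((hasDerivAt_const y.2 y.1).prodMk (hasDerivAt_id y.2)).prodMk (hasDerivAt_const y.2 t)

lemma linet_hasDerivAt (y : ℝ × ℝ) (t : ℝ) :
    HasDerivAt (fun s : ℝ => ((y.1, y.2), s)) et t :=
  ((hasDerivAt_const t y.1).prodMk (hasDerivAt_const t y.2)).prodMk (hasDerivAt_id t)

lemma vec_decomp (a b c : ℝ) : ((a, b), c) = a • e1 + b • e2 + c • et := by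
  simp [e1, e2, et, Prod.ext_iff]

lemma sdf_apply_vec (u : ℝ × ℝ → ℝ → ℝ) (p : (ℝ × ℝ) × ℝ) (a b c : ℝ)
    (w : (ℝ × ℝ) × ℝ) :
    sdf u p ((a, b), c) w =
      a * sdf u p e1 w + b * sdf u p e2 w + c * sdf u p et w := by
  rw [vec_decomp]
  simp

lemma sdf_vec (u : ℝ × ℝ → ℝ → ℝ) (p : (ℝ × ℝ) × ℝ) (a b : ℝ) (w : (ℝ × ℝ) × ℝ) :
    sdf u p ((a, b), 1) w =
      a * sdf u p e1 w + b * sdf u p e2 w + sdf u p et w := by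
  rw [sdf_apply_vec]; ring

section calc1
variable {u : ℝ × ℝ → ℝ → ℝ} (hu : ContDiff ℝ 2 fun p : (ℝ × ℝ) × ℝ => u p.1 p.2)
include hu

lemma Udiff : Differentiable ℝ (fun p : (ℝ × ℝ) × ℝ => u p.1 p.2) :=
  hu.differentiable two_ne_zero

lemma P1_eq (y : ℝ × ℝ) (t : ℝ) : P1 u y t = pd u e1 (y, t) :=
  by have h := (((Udiff hu (y, t)).hasFDerivAt).comp_hasDerivAt y.1 (line1_hasDerivAt y t)).deriv; exact h

lemma P2_eq (y : ℝ × ℝ) (t : ℝ) : P2 u y t = pd u e2 (y, t) :=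
  by have h := (((Udiff hu (y, t)).hasFDerivAt).comp_hasDerivAt y.2 (line2_hasDerivAt y t)).deriv; exact h

lemma Pt_eq (y : ℝ × ℝ) (t : ℝ) : Pt u y t = pd u et (y, t) :=
  (((Udiff hu (y, t)).hasFDerivAt).comp_hasDerivAt t (linet_hasDerivAt y t)).deriv

lemma pd_contDiff (w : (ℝ × ℝ) × ℝ) : ContDiff ℝ 1 (pd u w) :=
  (hu.fderiv_right (le_refl _)).clm_apply contDiff_const

lemma pd_hasFDerivAt (w p : (ℝ × ℝ) × ℝ) :
    HasFDerivAt (pd u w) (((ContinuousLinearMap.apply ℝ ℝ w).comp (sdf u p))) p := by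
  have h1 : DifferentiableAt ℝ (fderiv ℝ fun q : (ℝ × ℝ) × ℝ => u q.1 q.2) p :=
    ((hu.fderiv_right (m := 1) (le_refl _)).differentiable one_ne_zero) p
  exact (ContinuousLinearMap.apply ℝ ℝ w).hasFDerivAt.comp p h1.hasFDerivAt

lemma sd_symm (p v w : (ℝ × ℝ) × ℝ) : sdf u p v w = sdf u p w v :=
  (hu.contDiffAt.isSymmSndFDerivAt (by norm_num)) v w

lemma pd_comp1_hasDerivAt (w : (ℝ × ℝ) × ℝ) (y : ℝ × ℝ) (t : ℝ) :
    HasDerivAt (fun s => pd u w ((s, y.2), t)) (sdf u (y, t) e1 w) y.1 := by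
  have := (pd_hasFDerivAt hu w (y, t)).comp_hasDerivAt y.1 (line1_hasDerivAt y t)
  simp at this; exact this

lemma pd_comp2_hasDerivAt (w : (ℝ × ℝ) × ℝ) (y : ℝ × ℝ) (t : ℝ) :
    HasDerivAt (fun s => pd u w ((y.1, s), t)) (sdf u (y, t) e2 w) y.2 := by
  have := (pd_hasFDerivAt hu w (y, t)).comp_hasDerivAt y.2 (line2_hasDerivAt y t)
  simp at this; exact this

lemma P1_matD (α : ℝ) (y : ℝ × ℝ) (t : ℝ) :
    P1 (matD α u) y t = sdf u (y, t) e1 et +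
      α * (-y.2 * sdf u (y, t) e1 e1 + (pd u e2 (y, t) + y.1 * sdf u (y, t) e1 e2)) := by
  have hfun : (fun s => matD α u (s, y.2) t) = fun s =>
      pd u et ((s, y.2), t) + α * (-y.2 * pd u e1 ((s, y.2), t) + s * pd u e2 ((s, y.2), t)) := by
    funext s
    simp only [matD, Pt_eq hu, P1_eq hu, P2_eq hu]
  have hd : HasDerivAt (fun s =>
      pd u et ((s, y.2), t) + α * (-y.2 * pd u e1 ((s, y.2), t) + s * pd u e2 ((s, y.2), t)))
      (sdf u (y, t) e1 et +
        α * (-y.2 * sdf u (y, t) e1 e1 +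
          (1 * pd u e2 ((y.1, y.2), t) + y.1 * sdf u (y, t) e1 e2))) y.1 := by
    exact (pd_comp1_hasDerivAt hu et y t).add
      ((((pd_comp1_hasDerivAt hu e1 y t).const_mul (-y.2)).add
        ((hasDerivAt_id y.1).mul (pd_comp1_hasDerivAt hu e2 y t))).const_mul α)
  rw [P1, hfun, hd.deriv]
  ring_nf

lemma P2_matD (α : ℝ) (y : ℝ × ℝ) (t : ℝ) :
    P2 (matD α u) y t = sdf u (y, t) e2 et +
      α * (-(pd u e1 (y, t)) + -y.2 * sdf u (y, t) e2 e1 + y.1 * sdf u (y, t) e2 e2) := by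
  have hfun : (fun s => matD α u (y.1, s) t) = fun s =>
      pd u et ((y.1, s), t) + α * (-s * pd u e1 ((y.1, s), t) + y.1 * pd u e2 ((y.1, s), t)) := by
    funext s
    simp only [matD, Pt_eq hu, P1_eq hu, P2_eq hu]
  have hd : HasDerivAt (fun s =>
      pd u et ((y.1, s), t) + α * (-s * pd u e1 ((y.1, s), t) + y.1 * pd u e2 ((y.1, s), t)))
      (sdf u (y, t) e2 et +
        α * ((-1 * pd u e1 ((y.1, y.2), t) + -y.2 * sdf u (y, t) e2 e1) +
          y.1 * sdf u (y, t) e2 e2)) y.2 := by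
    exact (pd_comp2_hasDerivAt hu et y t).add
      ((((hasDerivAt_id y.2).neg.mul (pd_comp2_hasDerivAt hu e1 y t)).add
        ((pd_comp2_hasDerivAt hu e2 y t).const_mul y.1)).const_mul α)
  rw [P2, hfun, hd.deriv]
  ring_nf

end calc1

lemma curve_hasDerivAt (α : ℝ) (x : ℝ × ℝ) (t : ℝ) :
    HasDerivAt (fun τ => rot (α * τ) x)
      (-α * (rot (α * t) x).2, α * (rot (α * t) x).1) t := by
  have hlin : HasDerivAt (fun τ => α * τ) α t := by
    simpa using (hasDerivAt_id t).const_mul α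
  have hcos : HasDerivAt (fun τ => Real.cos (α * τ)) (-Real.sin (α * t) * α) t :=
    (Real.hasDerivAt_cos (α * t)).comp t hlin
  have hsin : HasDerivAt (fun τ => Real.sin (α * τ)) (Real.cos (α * t) * α) t :=
    (Real.hasDerivAt_sin (α * t)).comp t hlin
  have h1 : HasDerivAt (fun τ => Real.cos (α * τ) * x.1 - Real.sin (α * τ) * x.2)
      (-Real.sin (α * t) * α * x.1 - Real.cos (α * t) * α * x.2) t :=
    (hcos.mul_const x.1).sub (hsin.mul_const x.2)
  have h2 : HasDerivAt (fun τ => Real.sin (α * τ) * x.1 + Real.cos (α * τ) * x.2)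
      (Real.cos (α * t) * α * x.1 + -Real.sin (α * t) * α * x.2) t :=
    (hsin.mul_const x.1).add (hcos.mul_const x.2)
  have := h1.prodMk h2
  convert this using 2 <;> simp [rot] <;> ring

section calc3
variable {u : ℝ × ℝ → ℝ → ℝ} (hu : ContDiff ℝ 2 fun p : (ℝ × ℝ) × ℝ => u p.1 p.2)
include hu

/-- The key pointwise identity: `|∇u|²` along the rotating flow has time-derivative
`2 ∇u · ∇(Du)`. -/
lemma Gcurve_hasDerivAt (α : ℝ) (x : ℝ × ℝ) (t : ℝ) :
    HasDerivAt (fun τ => P1 u (rot (α * τ) x) τ ^ 2 + P2 u (rot (α * τ) x) τ ^ 2)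
      (2 * (P1 u (rot (α * t) x) t * P1 (matD α u) (rot (α * t) x) t +
        P2 u (rot (α * t) x) t * P2 (matD α u) (rot (α * t) x) t)) t := by
  have hγ : HasDerivAt (fun τ => ((rot (α * τ) x), τ))
      ((-α * (rot (α * t) x).2, α * (rot (α * t) x).1), 1) t :=
    (curve_hasDerivAt α x t).prodMk (hasDerivAt_id t)
  have hp : HasDerivAt (fun τ => pd u e1 (rot (α * τ) x, τ))
      (sdf u (rot (α * t) x, t) ((-α * (rot (α * t) x).2, α * (rot (α * t) x).1), 1) e1) t := by
    have := HasFDerivAt.comp_hasDerivAt (f := fun τ => ((rot (α * τ) x), τ)) t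
      (pd_hasFDerivAt hu e1 (rot (α * t) x, t)) hγ
    exact this
  have hq : HasDerivAt (fun τ => pd u e2 (rot (α * τ) x, τ))
      (sdf u (rot (α * t) x, t) ((-α * (rot (α * t) x).2, α * (rot (α * t) x).1), 1) e2) t := by
    have := HasFDerivAt.comp_hasDerivAt (f := fun τ => ((rot (α * τ) x), τ)) t
      (pd_hasFDerivAt hu e2 (rot (α * t) x, t)) hγ
    exact this
  have hfun : (fun τ => P1 u (rot (α * τ) x) τ ^ 2 + P2 u (rot (α * τ) x) τ ^ 2) =
      fun τ => pd u e1 (rot (α * τ) x, τ) ^ 2 + pd u e2 (rot (α * τ) x, τ) ^ 2 := by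
    funext τ
    rw [P1_eq hu, P2_eq hu]
  rw [hfun]
  have hd := (hp.pow 2).add (hq.pow 2)
  refine hd.congr_deriv ?_
  rw [P1_eq hu, P2_eq hu, P1_matD hu, P2_matD hu,
    sdf_vec _ _ _ _ e1, sdf_vec _ _ _ _ e2,
    sd_symm hu (rot (α * t) x, t) e1 et, sd_symm hu (rot (α * t) x, t) e2 et,
    sd_symm hu (rot (α * t) x, t) e2 e1]
  push_cast
  ring

lemma K_cont (α : ℝ) : Continuous fun q : (ℝ × ℝ) × ℝ =>
    P1 u (rot (α * q.2) q.1) q.2 * P1 (matD α u) (rot (α * q.2) q.1) q.2 +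
    P2 u (rot (α * q.2) q.1) q.2 * P2 (matD α u) (rot (α * q.2) q.1) q.2 := by
  have hΦ : Continuous fun q : (ℝ × ℝ) × ℝ => ((rot (α * q.2) q.1), q.2) := by
    unfold rot; fun_prop
  have hpd : ∀ w, Continuous fun q : (ℝ × ℝ) × ℝ => pd u w ((rot (α * q.2) q.1), q.2) :=
    fun w => (pd_contDiff hu w).continuous.comp hΦ
  have hsdfc : Continuous (sdf u) := by
    have := (hu.fderiv_right (m := 1) le_rfl).fderiv_right (m := 0) le_rfl
    exact this.continuous
  have hsdf : ∀ v w, Continuous fun q : (ℝ × ℝ) × ℝ =>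
      sdf u ((rot (α * q.2) q.1), q.2) v w := fun v w =>
    ((hsdfc.comp hΦ).clm_apply continuous_const).clm_apply continuous_const
  have hr : Continuous fun q : (ℝ × ℝ) × ℝ => rot (α * q.2) q.1 := by
    unfold rot; fun_prop
  have hr1 : Continuous fun q : (ℝ × ℝ) × ℝ => (rot (α * q.2) q.1).1 := hr.fst
  have hr2 : Continuous fun q : (ℝ × ℝ) × ℝ => (rot (α * q.2) q.1).2 := hr.snd
  have heq : (fun q : (ℝ × ℝ) × ℝ =>
      P1 u (rot (α * q.2) q.1) q.2 * P1 (matD α u) (rot (α * q.2) q.1) q.2 +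
      P2 u (rot (α * q.2) q.1) q.2 * P2 (matD α u) (rot (α * q.2) q.1) q.2) = fun q =>
      pd u e1 ((rot (α * q.2) q.1), q.2) *
        (sdf u ((rot (α * q.2) q.1), q.2) e1 et +
          α * (-(rot (α * q.2) q.1).2 * sdf u ((rot (α * q.2) q.1), q.2) e1 e1 +
            (pd u e2 ((rot (α * q.2) q.1), q.2) +
              (rot (α * q.2) q.1).1 * sdf u ((rot (α * q.2) q.1), q.2) e1 e2))) +
      pd u e2 ((rot (α * q.2) q.1), q.2) *
        (sdf u ((rot (α * q.2) q.1), q.2) e2 et +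
          α * (-(pd u e1 ((rot (α * q.2) q.1), q.2)) +
            -(rot (α * q.2) q.1).2 * sdf u ((rot (α * q.2) q.1), q.2) e2 e1 +
            (rot (α * q.2) q.1).1 * sdf u ((rot (α * q.2) q.1), q.2) e2 e2)) := by
    funext q
    rw [P1_eq hu, P2_eq hu, P1_matD hu, P2_matD hu]
  rw [heq]
  exact ((hpd e1).mul ((hsdf e1 et).add (continuous_const.mul
      ((hr2.neg.mul (hsdf e1 e1)).add ((hpd e2).add (hr1.mul (hsdf e1 e2))))))).add
    ((hpd e2).mul ((hsdf e2 et).add (continuous_const.mul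
      (((hpd e1).neg.add (hr2.neg.mul (hsdf e2 e1))).add (hr1.mul (hsdf e2 e2))))))

lemma Gslice_cont (α t : ℝ) : Continuous fun x : ℝ × ℝ =>
    P1 u (rot (α * t) x) t ^ 2 + P2 u (rot (α * t) x) t ^ 2 := by
  have hΦ : Continuous fun x : ℝ × ℝ => ((rot (α * t) x), t) := by
    unfold rot; fun_prop
  have heq : (fun x : ℝ × ℝ => P1 u (rot (α * t) x) t ^ 2 + P2 u (rot (α * t) x) t ^ 2) =
      fun x => pd u e1 ((rot (α * t) x), t) ^ 2 + pd u e2 ((rot (α * t) x), t) ^ 2 := by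
    funext x
    rw [P1_eq hu, P2_eq hu]
  rw [heq]
  exact (((pd_contDiff hu e1).continuous.comp hΦ).pow 2).add
    (((pd_contDiff hu e2).continuous.comp hΦ).pow 2)

end calc3

lemma integrableOn_nu_mul {Ω : Set (ℝ × ℝ)} (hΩm : MeasurableSet Ω)
    (hΩb : Bornology.IsBounded Ω) {ν₀ : ℝ × ℝ → ℝ} (hνm : Measurable ν₀)
    (hν0 : ∀ y, 0 ≤ ν₀ y) (hνb : ∃ C, ∀ y, ν₀ y ≤ C) {g : ℝ × ℝ → ℝ}
    (hg : Continuous g) : IntegrableOn (fun x => ν₀ x * g x) Ω := by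
  obtain ⟨Cν, hCν⟩ := hνb
  obtain ⟨M, hM⟩ := hΩb.isCompact_closure.exists_bound_of_continuousOn hg.continuousOn
  have hfin : volume Ω < ⊤ :=
    (measure_mono subset_closure).trans_lt hΩb.isCompact_closure.measure_lt_top
  refine Integrable.mono' ((integrableOn_const (C := Cν * M) hfin.ne))
    ((hνm.mul hg.measurable).aestronglyMeasurable) ?_
  filter_upwards [ae_restrict_mem hΩm] with x hx
  rw [Real.norm_eq_abs, abs_mul, abs_of_nonneg (hν0 x)]
  exact mul_le_mul (hCν x) (by simpa using hM x (subset_closure hx)) (abs_nonneg _)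
    ((hν0 x).trans (hCν x))

/-- Rotor-domain estimate. -/
theorem rotor_domain_estimate
    (T : ℝ) (hT : 0 < T) (α : ℝ) (Ω : Set (ℝ × ℝ))
    (hΩb : Bornology.IsBounded Ω) (hΩm : MeasurableSet Ω)
    (ν₀ : ℝ × ℝ → ℝ) (hνm : Measurable ν₀) (hν0 : ∀ y, 0 ≤ ν₀ y)
    (hνb : ∃ C, ∀ y, ν₀ y ≤ C)
    (u : ℝ × ℝ → ℝ → ℝ) (hu : ContDiff ℝ 2 fun p : (ℝ × ℝ) × ℝ => u p.1 p.2)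
    (hub : ∃ C, ∀ p : (ℝ × ℝ) × ℝ,
      ‖iteratedFDeriv ℝ 1 (fun q : (ℝ × ℝ) × ℝ => u q.1 q.2) p‖ ≤ C ∧
      ‖iteratedFDeriv ℝ 2 (fun q : (ℝ × ℝ) × ℝ => u q.1 q.2) p‖ ≤ C) :
    (∫ t in (0 : ℝ)..T, ∫ y in rot (α * t) '' Ω,
        ν₀ (rot (-(α * t)) y) *
          (P1 u y t * P1 (matD α u) y t + P2 u y t * P2 (matD α u) y t)) =
      (1 / 2) * (∫ y in rot (α * T) '' Ω,
          ν₀ (rot (-(α * T)) y) * (P1 u y T ^ 2 + P2 u y T ^ 2)) -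
        (1 / 2) * ∫ x in Ω, ν₀ x * (P1 u x 0 ^ 2 + P2 u x 0 ^ 2) ∧
    ((∀ x ∈ Ω, P1 u x 0 = 0 ∧ P2 u x 0 = 0) →
      (∫ t in (0 : ℝ)..T, ∫ y in rot (α * t) '' Ω,
          ν₀ (rot (-(α * t)) y) *
            (P1 u y t * P1 (matD α u) y t + P2 u y t * P2 (matD α u) y t)) =
        (1 / 2) * (∫ y in rot (α * T) '' Ω,
          ν₀ (rot (-(α * T)) y) * (P1 u y T ^ 2 + P2 u y T ^ 2)) ∧
      0 ≤ (1 / 2) * (∫ y in rot (α * T) '' Ω,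
          ν₀ (rot (-(α * T)) y) * (P1 u y T ^ 2 + P2 u y T ^ 2))) := by
  classical
  set K : (ℝ × ℝ) × ℝ → ℝ := fun q =>
    P1 u (rot (α * q.2) q.1) q.2 * P1 (matD α u) (rot (α * q.2) q.1) q.2 +
    P2 u (rot (α * q.2) q.1) q.2 * P2 (matD α u) (rot (α * q.2) q.1) q.2 with hK
  set G : ℝ × ℝ → ℝ → ℝ := fun x t =>
    P1 u (rot (α * t) x) t ^ 2 + P2 u (rot (α * t) x) t ^ 2 with hG
  have hKc : Continuous K := by rw [hK]; exact K_cont hu α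
  -- slicewise change of variables
  have hslice : ∀ t : ℝ, (∫ y in rot (α * t) '' Ω,
      ν₀ (rot (-(α * t)) y) *
        (P1 u y t * P1 (matD α u) y t + P2 u y t * P2 (matD α u) y t)) =
      ∫ x in Ω, ν₀ x * K (x, t) := by
    intro t
    rw [cov hΩm]
    exact setIntegral_congr_fun hΩm fun x _ => by simp only [hK, rot_left_inv]
  -- fundamental theorem of calculus in time, for each material point
  have hFTC : ∀ x : ℝ × ℝ, (∫ t in Set.Ioc (0 : ℝ) T, ν₀ x * K (x, t)) =
      1 / 2 * (ν₀ x * G x T) - 1 / 2 * (ν₀ x * G x 0) := by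
    intro x
    rw [← intervalIntegral.integral_of_le hT.le]
    have hder : ∀ t ∈ Set.uIcc (0 : ℝ) T,
        HasDerivAt (fun τ => 1 / 2 * ν₀ x * G x τ) (ν₀ x * K (x, t)) t := by
      intro t _
      have h := (Gcurve_hasDerivAt hu α x t).const_mul (1 / 2 * ν₀ x)
      simp only [hG, hK]
      refine h.congr_deriv ?_
      ring
    have hint : IntervalIntegrable (fun t => ν₀ x * K (x, t)) volume 0 T :=
      (continuous_const.mul (hKc.comp (continuous_const.prodMk
        continuous_id))).intervalIntegrable 0 T
    rw [intervalIntegral.integral_eq_sub_of_hasDerivAt hder hint]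
    ring
  -- product integrability for Fubini
  have hΩfin : volume Ω < ⊤ :=
    (measure_mono subset_closure).trans_lt hΩb.isCompact_closure.measure_lt_top
  haveI : IsFiniteMeasure (volume.restrict Ω) :=
    ⟨by rwa [Measure.restrict_apply_univ]⟩
  haveI : IsFiniteMeasure (volume.restrict (Set.Ioc (0 : ℝ) T)) :=
    ⟨by rw [Measure.restrict_apply_univ]; exact measure_Ioc_lt_top⟩
  obtain ⟨Cν, hCν⟩ := hνb
  have hW : Integrable (Function.uncurry fun (t : ℝ) (x : ℝ × ℝ) => ν₀ x * K (x, t))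
      ((volume.restrict (Set.Ioc (0 : ℝ) T)).prod (volume.restrict Ω)) := by
    have hCcomp : IsCompact ((Set.Icc (0 : ℝ) T) ×ˢ closure Ω) :=
      isCompact_Icc.prod hΩb.isCompact_closure
    have hKswap : Continuous fun z : ℝ × (ℝ × ℝ) => K (z.2, z.1) :=
      hKc.comp (continuous_snd.prodMk continuous_fst)
    obtain ⟨M, hM⟩ := hCcomp.exists_bound_of_continuousOn hKswap.continuousOn
    refine Integrable.mono' (integrable_const (Cν * M))
      (((hνm.comp measurable_snd).mul
        (hKc.measurable.comp (measurable_snd.prodMk measurable_fst))).aestronglyMeasurable) ?_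
    have hae : ∀ᵐ z ∂((volume.restrict (Set.Ioc (0 : ℝ) T)).prod (volume.restrict Ω)),
        z ∈ (Set.Ioc (0 : ℝ) T) ×ˢ Ω := by
      rw [Measure.prod_restrict]
      exact ae_restrict_mem (measurableSet_Ioc.prod hΩm)
    filter_upwards [hae] with z hz
    have hz1 : z.1 ∈ Set.Icc (0 : ℝ) T := Set.Ioc_subset_Icc_self hz.1
    have hz2 : z.2 ∈ closure Ω := subset_closure hz.2
    have hMz := hM (z.1, z.2) (Set.mk_mem_prod hz1 hz2)
    simp only [Function.uncurry] at *
    rw [Real.norm_eq_abs, abs_mul, abs_of_nonneg (hν0 z.2)]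
    exact mul_le_mul (hCν z.2) (by simpa using hMz) (abs_nonneg _)
      ((hν0 z.2).trans (hCν z.2))
  -- integrability of the endpoint integrands
  have hIT : IntegrableOn (fun x => ν₀ x * G x T) Ω := by
    refine integrableOn_nu_mul hΩm hΩb hνm hν0 ⟨Cν, hCν⟩ ?_
    rw [hG]; exact Gslice_cont hu α T
  have hI0 : IntegrableOn (fun x => ν₀ x * G x 0) Ω := by
    refine integrableOn_nu_mul hΩm hΩb hνm hν0 ⟨Cν, hCν⟩ ?_
    rw [hG]; exact Gslice_cont hu α 0
  -- main computation
  have main : (∫ t in (0 : ℝ)..T, ∫ y in rot (α * t) '' Ω,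
      ν₀ (rot (-(α * t)) y) *
        (P1 u y t * P1 (matD α u) y t + P2 u y t * P2 (matD α u) y t)) =
      1 / 2 * (∫ x in Ω, ν₀ x * G x T) - 1 / 2 * ∫ x in Ω, ν₀ x * G x 0 := by
    rw [intervalIntegral.integral_congr
      (g := fun t => ∫ x in Ω, ν₀ x * K (x, t)) (fun t _ => hslice t)]
    rw [intervalIntegral.integral_of_le hT.le]
    rw [integral_integral_swap hW]
    simp only [hFTC]
    rw [integral_sub (hIT.const_mul (1 / 2)) (hI0.const_mul (1 / 2)),
      integral_const_mul, integral_const_mul]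
  -- matching the endpoint integrals
  have hTmatch : (∫ y in rot (α * T) '' Ω,
      ν₀ (rot (-(α * T)) y) * (P1 u y T ^ 2 + P2 u y T ^ 2)) =
      ∫ x in Ω, ν₀ x * G x T := by
    rw [cov hΩm]
    exact setIntegral_congr_fun hΩm fun x _ => by simp only [hG, rot_left_inv]
  have h0match : (∫ x in Ω, ν₀ x * (P1 u x 0 ^ 2 + P2 u x 0 ^ 2)) =
      ∫ x in Ω, ν₀ x * G x 0 := by
    refine setIntegral_congr_fun hΩm fun x _ => ?_
    simp only [hG, mul_zero, rot_zero]
  have hfirst : (∫ t in (0 : ℝ)..T, ∫ y in rot (α * t) '' Ω,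
      ν₀ (rot (-(α * t)) y) *
        (P1 u y t * P1 (matD α u) y t + P2 u y t * P2 (matD α u) y t)) =
      (1 / 2) * (∫ y in rot (α * T) '' Ω,
          ν₀ (rot (-(α * T)) y) * (P1 u y T ^ 2 + P2 u y T ^ 2)) -
        (1 / 2) * ∫ x in Ω, ν₀ x * (P1 u x 0 ^ 2 + P2 u x 0 ^ 2) := by
    rw [hTmatch, h0match]
    exact main
  refine ⟨hfirst, fun hvan => ?_⟩
  have hz : (∫ x in Ω, ν₀ x * (P1 u x 0 ^ 2 + P2 u x 0 ^ 2)) = 0 := by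
    have hEq : Set.EqOn (fun x => ν₀ x * (P1 u x 0 ^ 2 + P2 u x 0 ^ 2))
        (fun _ => (0 : ℝ)) Ω := fun x hx => by
      simp only
      rw [(hvan x hx).1, (hvan x hx).2]
      ring
    rw [setIntegral_congr_fun hΩm hEq, integral_zero]
  have hnn : 0 ≤ (1 / 2 : ℝ) * (∫ y in rot (α * T) '' Ω,
      ν₀ (rot (-(α * T)) y) * (P1 u y T ^ 2 + P2 u y T ^ 2)) := by
    rw [hTmatch]
    refine mul_nonneg (by norm_num) (setIntegral_nonneg hΩm fun x _ => ?_)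
    refine mul_nonneg (hν0 x) ?_
    simp only [hG]
    positivity
  exact ⟨by rw [hfirst, hz]; ring, hnn⟩
end
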